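/- arXiv:2605.22700 — 2 statements merged into one kernel-verified Lean document; each statement's English description precedes it below -/
import Mathlib

section
/- Let R be a ring and n ≥ 2 a natural number. The direct product ring R^n (the product of n copies of R) is a weakly ΔU-ring if and only if R^n is a ΔU-ring, which holds if and only if R is a ΔU-ring. -/
/-- `Δ(R) = {r ∈ R : r + u is a unit for every unit u}`. -/
def Delta (R : Type*) [Ring R] : Set R :=
  {r : R | ∀ u : R, IsUnit u → IsUnit (r + u)}

/-- `R` is a weakly ΔU-ring: every unit is `1 + d` or `-1 + d` with `d ∈ Δ(R)`. -/
def IsWDU (R : Type*) [Ring R] : Prop :=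
  ∀ u : R, IsUnit u → ∃ d ∈ Delta R, u = 1 + d ∨ u = -1 + d

/-- `R` is a ΔU-ring: every unit is `1 + d` with `d ∈ Δ(R)`. -/
def IsDU (R : Type*) [Ring R] : Prop :=
  ∀ u : R, IsUnit u → ∃ d ∈ Delta R, u = 1 + d

lemma pi_isUnit {R : Type*} [Monoid R] {n : ℕ} {f : Fin n → R} :
    IsUnit f ↔ ∀ i, IsUnit (f i) := by
  constructor
  · intro hf i
    exact hf.map (Pi.evalMonoidHom (fun _ => R) i)
  · intro hf
    refine ⟨⟨f, fun i => ↑(hf i).unit⁻¹, funext fun i => ?_, funext fun i => ?_⟩, rfl⟩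
    · exact (hf i).mul_val_inv
    · exact (hf i).val_inv_mul

lemma delta_add {R : Type*} [Ring R] {a b : R} (ha : a ∈ Delta R) (hb : b ∈ Delta R) :
    a + b ∈ Delta R := fun u hu => by
  have := ha (b + u) (hb u hu)
  rwa [← add_assoc] at this

lemma delta_neg {R : Type*} [Ring R] {a : R} (ha : a ∈ Delta R) : -a ∈ Delta R := fun u hu => by
  have h2 := (ha (-u) hu.neg).neg
  rwa [neg_add, neg_neg] at h2

lemma delta_pi {R : Type*} [Ring R] {n : ℕ} {f : Fin n → R} :
    f ∈ Delta (Fin n → R) ↔ ∀ i, f i ∈ Delta R := by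
  constructor
  · intro hf i v hv
    have h1 : IsUnit (f + fun _ => v) := hf _ (pi_isUnit.mpr fun _ => hv)
    have := (pi_isUnit.mp h1) i
    simpa using this
  · intro hf u hu
    rw [pi_isUnit] at hu ⊢
    intro i
    exact hf i (u i) (hu i)

/-- For `n ≥ 2`, `R^n` is weakly ΔU iff `R^n` is ΔU iff `R` is ΔU. -/
theorem stmt_4 (R : Type*) [Ring R] (n : ℕ) (hn : 2 ≤ n) :
    (IsWDU (Fin n → R) ↔ IsDU (Fin n → R)) ∧ (IsDU (Fin n → R) ↔ IsDU R) := by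
  have hRto : IsDU R → IsDU (Fin n → R) := by
    intro hR f hf
    rw [pi_isUnit] at hf
    choose d hd hd' using fun i => hR (f i) (hf i)
    exact ⟨d, delta_pi.mpr hd, funext hd'⟩
  have hWto : IsWDU (Fin n → R) → IsDU R := by
    intro hW v hv
    set i0 : Fin n := ⟨0, by omega⟩ with hi0
    set i1 : Fin n := ⟨1, by omega⟩ with hi1
    have hne : i1 ≠ i0 := by simp [hi0, hi1, Fin.ext_iff]
    set f : Fin n → R := fun j => if j = i0 then v else 1 with hfdef
    have hfu : IsUnit f := pi_isUnit.mpr (by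
      intro j; by_cases h : j = i0 <;> simp [hfdef, h, hv])
    obtain ⟨d, hd, hcase⟩ := hW f hfu
    have hdR := delta_pi.mp hd
    rcases hcase with h | h
    · refine ⟨d i0, hdR i0, ?_⟩
      have := congrFun h i0
      simpa [hfdef] using this
    · have h1 := congrFun h i1
      have h0 := congrFun h i0
      simp [hfdef, hne] at h1 h0
      have h2 : d i1 = 2 := by
        rw [← one_add_one_eq_two]; exact (eq_neg_add_iff_add_eq.mp h1).symm
      refine ⟨d i0 + -(d i1), delta_add (hdR i0) (delta_neg (hdR i1)), ?_⟩
      rw [h0, h2, show (2:R) = 1 + 1 from one_add_one_eq_two.symm]; abel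
  refine ⟨⟨fun hW => hRto (hWto hW), fun hD u hu => (hD u hu).imp fun d hd => ⟨hd.1, Or.inl hd.2⟩⟩,
    ⟨?_, hRto⟩⟩
  intro hP v hv
  obtain ⟨d, hd, he⟩ := hP (fun _ => v) (pi_isUnit.mpr fun _ => hv)
  exact ⟨d ⟨0, by omega⟩, delta_pi.mp hd _, congrFun he _⟩
end

section
/- Let R be a weakly ΔU-ring such that the Jacobson radical J(R) is zero and every nonzero right ideal of R contains a nonzero idempotent. Then R is reduced, i.e., a² = 0 implies a = 0 for all a ∈ R. -/
section Aux

variable {R : Type*} [Ring R]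

lemma sq_unit {x : R} (hx : x * x = 0) : IsUnit (1 + x) := by
  refine ⟨⟨1 + x, 1 - x, ?_, ?_⟩, rfl⟩
  · have h : (1 + x) * (1 - x) = 1 - x * x := by noncomm_ring
    rw [h, hx, sub_zero]
  · have h : (1 - x) * (1 + x) = 1 - x * x := by noncomm_ring
    rw [h, hx, sub_zero]

lemma delta_mul_unit {d u : R} (hd : d ∈ Delta R) (hu : IsUnit u) :
    d * u ∈ Delta R := by
  obtain ⟨U, rfl⟩ := hu
  intro v hv
  have h1 : IsUnit (d + v * ↑U⁻¹) := hd _ (hv.mul U⁻¹.isUnit)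
  have h2 : (d + v * ↑U⁻¹) * ↑U = d * ↑U + v := by
    rw [add_mul, mul_assoc, U.inv_mul, mul_one]
  rw [← h2]
  exact h1.mul U.isUnit

lemma delta_neg_s9 {d : R} (hd : d ∈ Delta R) : -d ∈ Delta R := by
  have h := delta_mul_unit hd isUnit_one.neg
  simpa using h

lemma delta_add_s9 {d₁ d₂ : R} (h1 : d₁ ∈ Delta R) (h2 : d₂ ∈ Delta R) :
    d₁ + d₂ ∈ Delta R := by
  intro u hu
  have h := h1 (d₂ + u) (h2 u hu)
  rwa [← add_assoc] at h

lemma delta_one_sub {d : R} (hd : d ∈ Delta R) : IsUnit (1 - d) := by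
  have h := hd (-1) isUnit_one.neg
  have h2 : -(d + -1) = 1 - d := by noncomm_ring
  rw [← h2]
  exact h.neg

lemma delta_mul {d₁ d₂ : R} (h1 : d₁ ∈ Delta R) (h2 : d₂ ∈ Delta R) :
    d₁ * d₂ ∈ Delta R := by
  intro u hu
  have ha : d₁ * (d₂ + u) ∈ Delta R := delta_mul_unit h1 (h2 u hu)
  have hb : IsUnit ((1 - d₁) * u) := (delta_one_sub h1).mul hu
  have h := ha _ hb
  have heq : d₁ * (d₂ + u) + (1 - d₁) * u = d₁ * d₂ + u := by noncomm_ring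
  rwa [heq] at h

lemma dich (hW : IsWDU R) {x : R} (hx : x * x = 0) :
    x ∈ Delta R ∨ x + 2 ∈ Delta R := by
  obtain ⟨d, hd, hc | hc⟩ := hW _ (sq_unit hx)
  · left
    have : x = d := add_left_cancel hc
    rwa [this]
  · right
    have h3 : (1 : R) + (1 + x) = d := by rw [hc, ← add_assoc]; norm_num
    have h2 : x + 2 = d := by
      rw [← h3, add_comm x 2, ← one_add_one_eq_two, add_assoc]
    rwa [h2]

/-- The key contradiction: a square-zero element of `Δ(R)` which "divides" a nonzero
idempotent in this structured way gives a unit which is a zero divisor. -/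
lemma key' {t h r₁ : R} (ht2 : t * t = 0) (hh : h * h = h) (hne : h ≠ 0)
    (hr1t : r₁ * t = h) (hr1sq : r₁ * r₁ = 0) (hht : h * t = 0)
    (htD : t ∈ Delta R) : False := by
  have hnegsq : (-r₁) * (-r₁) = 0 := by rw [neg_mul_neg, hr1sq]
  have hu1 : IsUnit (1 - r₁) := by
    have := sq_unit hnegsq
    rwa [← sub_eq_add_neg] at this
  have hu2 : IsUnit (1 + r₁) := sq_unit hr1sq
  have hv : IsUnit (1 + t - h) := by
    have h1 : IsUnit ((1 + r₁) + t) := by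
      have := htD (1 + r₁) hu2
      rwa [add_comm] at this
    have h2 : (1 - r₁) * ((1 + r₁) + t) = 1 + t - h := by
      have e1 : (1 - r₁) * ((1 + r₁) + t) = 1 - r₁ * r₁ + t - r₁ * t := by noncomm_ring
      rw [e1, hr1sq, hr1t]; noncomm_ring
    rw [← h2]
    exact hu1.mul h1
  have hx0 : (1 + t - h) * (t * h - h) = 0 := by
    have e1 : (1 + t - h) * (t * h - h) =
        t * h - h + (t * (t * h) - t * h) - (h * (t * h) - h * h) := by noncomm_ring
    rw [e1, ← mul_assoc, ht2, zero_mul, ← mul_assoc h t h, hht, zero_mul, hh]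
    noncomm_ring
  have hx0ne : t * h - h ≠ 0 := by
    intro hth
    have h1 : t * h = h := by rwa [sub_eq_zero] at hth
    have hkey : h = (t * t) * h := by
      conv_rhs => rw [mul_assoc, h1]
      exact h1.symm
    rw [ht2, zero_mul] at hkey
    exact hne hkey
  obtain ⟨V, hV⟩ := hv
  apply hx0ne
  calc t * h - h = 1 * (t * h - h) := (one_mul _).symm
    _ = (↑V⁻¹ * ↑V) * (t * h - h) := by rw [V.inv_mul]
    _ = ↑V⁻¹ * ((1 + t - h) * (t * h - h)) := by rw [mul_assoc, hV]
    _ = 0 := by rw [hx0, mul_zero]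

/-- Main auxiliary: if `a² = 0` and `aR` contains a nonzero idempotent `e = a*s`, then
a weakly ΔU-ring yields a contradiction. -/
lemma build (hW : IsWDU R) {a e s : R} (ha2 : a * a = 0) (hes : e = a * s)
    (hee : e * e = e) (hene : e ≠ 0) : False := by
  obtain ⟨r, hr⟩ : ∃ r : R, r = s * e := ⟨_, rfl⟩
  obtain ⟨h, hhdef⟩ : ∃ h : R, h = r * a := ⟨_, rfl⟩
  obtain ⟨r₁, hr1def⟩ : ∃ r₁ : R, r₁ = r - r * h := ⟨_, rfl⟩
  obtain ⟨g, hgdef⟩ : ∃ g : R, g = e - e * h := ⟨_, rfl⟩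
  have f1 : a * r = e := by rw [hr, ← mul_assoc, ← hes, hee]
  have f2 : r * e = r := by rw [hr, mul_assoc, hee]
  have f3 : a * e = 0 := by rw [hes, ← mul_assoc, ha2, zero_mul]
  have f4 : h * h = h := by
    rw [hhdef, mul_assoc r a (r * a), ← mul_assoc a r a, f1, ← mul_assoc, f2]
  have f5 : h * a = 0 := by rw [hhdef, mul_assoc, ha2, mul_zero]
  have f6 : h * r = r := by rw [hhdef, mul_assoc, f1, f2]
  have f8 : h * e = 0 := by rw [hhdef, mul_assoc, f3, mul_zero]
  have f9 : h ≠ 0 := by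
    intro h0
    apply hene
    have he2 : a * (h * r) = e := by
      rw [hhdef, mul_assoc r a r, f1, f2]; exact f1
    rw [h0, zero_mul, mul_zero] at he2
    exact he2.symm
  have f10 : e * a ≠ 0 := by
    intro hea
    apply f9
    have hq : r * (e * a) = h := by
      rw [← mul_assoc, f2, ← hhdef]
    rw [hea, mul_zero] at hq
    exact hq.symm
  have f11 : r₁ * a = h := by
    rw [hr1def, sub_mul, mul_assoc, f5, mul_zero, sub_zero]
    exact hhdef.symm
  have f12 : r₁ * h = 0 := by
    rw [hr1def, sub_mul, mul_assoc, f4, sub_self]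
  have f13 : h * r₁ = r₁ := by
    rw [hr1def, mul_sub, f6, ← mul_assoc, f6]
  have f14 : r₁ * r₁ = 0 := by
    calc r₁ * r₁ = r₁ * (h * r₁) := by rw [f13]
      _ = (r₁ * h) * r₁ := (mul_assoc _ _ _).symm
      _ = 0 := by rw [f12, zero_mul]
  have f15 : a * r₁ = g := by
    rw [hr1def, mul_sub, f1, ← mul_assoc, f1]
    exact hgdef.symm
  have p1 : (e * h) * e = 0 := by rw [mul_assoc, f8, mul_zero]
  have p2 : (e * h) * (e * h) = 0 := by
    rw [mul_assoc, ← mul_assoc h e h, f8, zero_mul, mul_zero]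
  have p3 : e * (e * h) = e * h := by rw [← mul_assoc, hee]
  have f16 : g * g = g := by
    have e1 : g * g = e * e - e * (e * h) - ((e * h) * e - (e * h) * (e * h)) := by
      rw [hgdef]; noncomm_ring
    rw [e1, hee, p3, p1, p2, hgdef]
    noncomm_ring
  have f17 : g * h = 0 := by rw [hgdef, sub_mul, mul_assoc, f4, sub_self]
  have f18 : h * g = 0 := by
    rw [hgdef, mul_sub, f8, ← mul_assoc, f8, zero_mul, sub_zero]
  have f19 : g ≠ 0 := by
    intro hg0
    apply f10
    have heh : e = e * h := by
      rw [hg0] at hgdef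
      exact (sub_eq_zero.mp hgdef.symm)
    calc e * a = (e * h) * a := by rw [← heh]
      _ = e * (h * a) := mul_assoc _ _ _
      _ = 0 := by rw [f5, mul_zero]
  have f20 : g * r₁ = 0 := by
    calc g * r₁ = g * (h * r₁) := by rw [f13]
      _ = (g * h) * r₁ := (mul_assoc _ _ _).symm
      _ = 0 := by rw [f17, zero_mul]
  have f21 : (a * h) * (a * h) = 0 := by
    rw [mul_assoc, ← mul_assoc h a h, f5, zero_mul, mul_zero]
  have f22 : (a * h) * r₁ = g := by rw [mul_assoc, f13, f15]
  -- case analysis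
  rcases dich hW ha2 with hA | hB
  · exact key' ha2 f4 f9 f11 f14 f5 hA
  rcases dich hW f14 with hA' | hB'
  · exact key' f14 f16 f19 f22 f21 f20 hA'
  -- both `a + 2` and `r₁ + 2` are in Δ
  have hd12 : (a + 2) * (r₁ + 2) ∈ Delta R := delta_mul hB hB'
  have hd21 : (r₁ + 2) * (a + 2) ∈ Delta R := delta_mul hB' hB
  have hx : g - h ∈ Delta R := by
    have hsub := delta_add_s9 hd12 (delta_neg_s9 hd21)
    have heq : (a + 2) * (r₁ + 2) + -((r₁ + 2) * (a + 2)) = a * r₁ - r₁ * a := by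
      noncomm_ring
    rw [heq, f15, f11] at hsub
    exact hsub
  have hxx : (g - h) * (g - h) = g + h := by
    have e1 : (g - h) * (g - h) = g * g - g * h - (h * g - h * h) := by noncomm_ring
    rw [e1, f16, f17, f18, f4]
    noncomm_ring
  have hx3 : (g - h) * ((g - h) * (g - h)) = g - h := by
    rw [hxx]
    have e1 : (g - h) * (g + h) = g * g + g * h - (h * g + h * h) := by noncomm_ring
    rw [e1, f16, f17, f18, f4]
    noncomm_ring
  have hxsq : (g - h) * (g - h) ∈ Delta R := delta_mul hx hx
  have hu : IsUnit ((g - h) * (g - h) - 1) := by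
    have := hxsq (-1) isUnit_one.neg
    rwa [← sub_eq_add_neg] at this
  have hzero : (g - h) * ((g - h) * (g - h) - 1) = 0 := by
    rw [mul_sub, hx3, mul_one, sub_self]
  have hgh0 : g - h = 0 := by
    obtain ⟨V, hV⟩ := hu
    calc g - h = (g - h) * (↑V * ↑V⁻¹) := by rw [V.mul_inv, mul_one]
      _ = ((g - h) * ↑V) * ↑V⁻¹ := (mul_assoc _ _ _).symm
      _ = 0 := by rw [hV, hzero, zero_mul]
  have hgh : g = h := sub_eq_zero.mp hgh0
  apply f19
  calc g = g * g := f16.symm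
    _ = g * h := by rw [hgh]
    _ = 0 := f17

end Aux

/-- A weakly ΔU-ring with `J(R) = 0` in which every nonzero right ideal
contains a nonzero idempotent is reduced. (Right ideals are encoded as additive subgroups
closed under right multiplication.) -/
theorem stmt_9 (R : Type*) [Ring R] (h : IsWDU R)
    (hJ : ∀ x : R, (∀ y : R, IsUnit (1 - y * x)) → x = 0)
    (hId : ∀ I : AddSubgroup R, (∀ x ∈ I, ∀ r : R, x * r ∈ I) → I ≠ ⊥ →
      ∃ e ∈ I, e ≠ 0 ∧ IsIdempotentElem e) :
    ∀ a : R, a * a = 0 → a = 0 := by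
  intro a ha2
  by_contra hane
  -- the right ideal aR
  let I : AddSubgroup R :=
    { carrier := {x | ∃ y, x = a * y}
      add_mem' := by
        rintro x y ⟨y1, rfl⟩ ⟨y2, rfl⟩
        exact ⟨y1 + y2, by rw [mul_add]⟩
      zero_mem' := ⟨0, by rw [mul_zero]⟩
      neg_mem' := by
        rintro x ⟨y, rfl⟩
        exact ⟨-y, by rw [mul_neg]⟩ }
  have hclose : ∀ x ∈ I, ∀ r : R, x * r ∈ I := by
    rintro x ⟨y, rfl⟩ r
    exact ⟨y * r, by rw [mul_assoc]⟩
  have hbot : I ≠ ⊥ := by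
    intro hb
    apply hane
    have haI : a ∈ I := ⟨1, (mul_one a).symm⟩
    rw [hb] at haI
    exact AddSubgroup.mem_bot.mp haI
  obtain ⟨e, heI, hene, hid⟩ := hId I hclose hbot
  obtain ⟨s, hes⟩ := heI
  exact build h ha2 hes hid hene
end
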